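/- arXiv:2007.00634 — 3 statements merged into one kernel-verified Lean document; each statement's English description precedes it below -/
import Mathlib

section
/- Let F : ℒⁿ → Fin be a special (pushout-preserving) functor. Then for all 0 ≤ i ≤ j ≤ n, the set F(i,j) is a quotient of the disjoint union (⨿_{k=i}^{j} F(k,k)) ⊔ (⨿_{k=i}^{j−1} F(k,k+1)); that is, the canonical map from this disjoint union to F(i,j) induced by the morphisms (k,k) → (i,j) and (k,k+1) → (i,j) in ℒⁿ is jointly surjective. -/
/-!
STATEMENT 3: Let `F : ℒⁿ → Fin` be a special (pushout-preserving) functor. Then for all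
`0 ≤ i ≤ j ≤ n`, the set `F(i,j)` is a quotient of the disjoint union
`(⨿_{k=i}^{j} F(k,k)) ⊔ (⨿_{k=i}^{j−1} F(k,k+1))`: the canonical map induced by the
morphisms `(k,k) → (i,j)` and `(k,k+1) → (i,j)` in `ℒⁿ` is jointly surjective.
-/

open CategoryTheory

/-- The poset ℒⁿ: objects are pairs `(i,j)` with `0 ≤ i ≤ j ≤ n`, and a (unique)
morphism `(i,j) → (i',j')` exactly when `i' ≤ i` and `j ≤ j'`. -/
@[ext]
structure LObjN (n : ℕ) where
  i : ℕ
  j : ℕ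
  hij : i ≤ j
  hn : j ≤ n

instance (n : ℕ) : PartialOrder (LObjN n) where
  le a b := b.i ≤ a.i ∧ a.j ≤ b.j
  le_refl a := ⟨le_refl _, le_refl _⟩
  le_trans a b c h₁ h₂ := ⟨le_trans h₂.1 h₁.1, le_trans h₁.2 h₂.2⟩
  le_antisymm a b h₁ h₂ := by
    ext
    · exact le_antisymm h₂.1 h₁.1
    · exact le_antisymm h₁.2 h₂.2

/-- A functor `ℒⁿ → Fin` is special if it sends every pushout square of `ℒⁿ` (every
commutative square of `ℒⁿ` is such) to a pushout square of finite sets. -/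
def Special {n : ℕ} (F : LObjN n ⥤ Type) : Prop :=
  ∀ ⦃a b c d : LObjN n⦄ (f : a ⟶ b) (g : a ⟶ c) (h : b ⟶ d) (k : c ⟶ d),
    IsPushout f g h k → IsPushout (F.map f) (F.map g) (F.map h) (F.map k)

/-
Induction on `j - i`: if `j ≥ i + 2`, the square
`(i+1, j-1) → (i, j-1), (i+1, j) → (i, j)` is a pushout in `ℒⁿ`, since `(i, j)` is the join of
`(i, j-1)` and `(i+1, j)`. A special `F` sends it to a pushout of sets, whose corner is covered by
the images of the two sides, each of which is shorter than `(i, j)`.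
-/

lemma isPushout_homOfLE {P : Type*} [Preorder P] {a b c d : P} (hab : a ≤ b) (hac : a ≤ c)
    (hbd : b ≤ d) (hcd : c ≤ d) (hd : ∀ e, b ≤ e → c ≤ e → d ≤ e) :
    IsPushout (homOfLE hab) (homOfLE hac) (homOfLE hbd) (homOfLE hcd) :=
  ⟨⟨Subsingleton.elim _ _⟩, ⟨Limits.PushoutCocone.IsColimit.mk _
    (fun s => homOfLE (hd _ s.inl.le s.inr.le))
    (fun _ => Subsingleton.elim _ _) (fun _ => Subsingleton.elim _ _)
    (fun _ _ _ _ => Subsingleton.elim _ _)⟩⟩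

namespace LObjN

variable {n : ℕ}

lemma le_def {a b : LObjN n} : a ≤ b ↔ b.i ≤ a.i ∧ a.j ≤ b.j := Iff.rfl

variable (F : LObjN n ⥤ Type)

/-- `y` is in the image of an object of `ℒⁿ₀`, i.e. of some `(k, k)` or `(k, k + 1)`. -/
def IsGenerated {p : LObjN n} (y : F.obj p) : Prop :=
  ∃ (q : LObjN n) (hq : q ≤ p), q.j ≤ q.i + 1 ∧ ∃ x : F.obj q, F.map (homOfLE hq) x = y

variable {F}

lemma isGenerated_of_j_le_succ_i {p : LObjN n} (hp : p.j ≤ p.i + 1) (y : F.obj p) :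
    IsGenerated F y :=
  ⟨p, le_rfl, hp, y, by rw [Subsingleton.elim (homOfLE _) (𝟙 p), Functor.map_id_apply]⟩

lemma IsGenerated.map {p p' : LObjN n} {y : F.obj p} (hy : IsGenerated F y) (h : p ≤ p') :
    IsGenerated F (F.map (homOfLE h) y) := by
  obtain ⟨q, hq, hshort, x, rfl⟩ := hy
  exact ⟨q, hq.trans h, hshort, x, by rw [← Functor.map_comp_apply, homOfLE_comp]⟩

lemma IsGenerated.exists_diag_or_superdiag {p : LObjN n} {y : F.obj p}
    (hy : IsGenerated F y) :
    (∃ (k : ℕ) (h₁ : p.i ≤ k) (h₂ : k ≤ p.j)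
        (x : F.obj ⟨k, k, le_refl k, le_trans h₂ p.hn⟩),
        F.map (homOfLE ⟨h₁, h₂⟩) x = y) ∨
    (∃ (k : ℕ) (h₁ : p.i ≤ k) (h₂ : k + 1 ≤ p.j)
        (x : F.obj ⟨k, k + 1, Nat.le_succ k, le_trans h₂ p.hn⟩),
        F.map (homOfLE ⟨h₁, h₂⟩) x = y) := by
  obtain ⟨⟨k, l, hkl, hln⟩, hq, hshort, x, rfl⟩ := hy
  obtain ⟨h₁, h₂⟩ := le_def.mp hq
  dsimp only at hshort h₁ h₂
  obtain rfl | rfl : k = l ∨ l = k + 1 := by omega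
  · exact Or.inl ⟨k, h₁, h₂, x, rfl⟩
  · exact Or.inr ⟨k, h₁, h₂, x, rfl⟩

theorem _root_.Special.isGenerated (hF : Special F) : ∀ {p : LObjN n} (y : F.obj p),
    IsGenerated F y
  | ⟨i, j, hij, hjn⟩, y => by
    by_cases hshort : j ≤ i + 1
    · exact isGenerated_of_j_le_succ_i hshort y
    obtain ⟨j, rfl⟩ : ∃ j', j = j' + 1 := ⟨j - 1, by omega⟩
    have hsq := hF _ _ _ _ <| isPushout_homOfLE
      (a := ⟨i + 1, j, by omega, by omega⟩) (b := ⟨i, j, by omega, by omega⟩)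
      (c := ⟨i + 1, j + 1, by omega, hjn⟩) (d := ⟨i, j + 1, hij, hjn⟩)
      (le_def.mpr ⟨i.le_succ, le_rfl⟩) (le_def.mpr ⟨le_rfl, j.le_succ⟩)
      (le_def.mpr ⟨le_rfl, j.le_succ⟩) (le_def.mpr ⟨i.le_succ, le_rfl⟩)
      fun _ hb hc => le_def.mpr ⟨(le_def.mp hb).1, (le_def.mp hc).2⟩
    obtain ⟨x, rfl⟩ | ⟨x, rfl⟩ := Limits.Types.eq_or_eq_of_isPushout hsq y
    · exact (Special.isGenerated hF x).map _
    · exact (Special.isGenerated hF x).map _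
  termination_by p => p.j - p.i

end LObjN

theorem stmt3_general (n : ℕ) (F : LObjN n ⥤ Type)
    (hspec : Special F) (p : LObjN n) (y : F.obj p) :
    (∃ (k : ℕ) (h₁ : p.i ≤ k) (h₂ : k ≤ p.j)
        (x : F.obj ⟨k, k, le_refl k, le_trans h₂ p.hn⟩),
        F.map (homOfLE ⟨h₁, h₂⟩) x = y) ∨
    (∃ (k : ℕ) (h₁ : p.i ≤ k) (h₂ : k + 1 ≤ p.j)
        (x : F.obj ⟨k, k + 1, Nat.le_succ k, le_trans h₂ p.hn⟩),
        F.map (homOfLE ⟨h₁, h₂⟩) x = y) :=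
  (hspec.isGenerated y).exists_diag_or_superdiag

theorem stmt3 (n : ℕ) (F : LObjN n ⥤ Type) (hfin : ∀ a : LObjN n, Finite (F.obj a))
    (hspec : Special F) (p : LObjN n) (y : F.obj p) :
    (∃ (k : ℕ) (h₁ : p.i ≤ k) (h₂ : k ≤ p.j)
        (x : F.obj ⟨k, k, le_refl k, le_trans h₂ p.hn⟩),
        F.map (homOfLE ⟨h₁, h₂⟩) x = y) ∨
    (∃ (k : ℕ) (h₁ : p.i ≤ k) (h₂ : k + 1 ≤ p.j)
        (x : F.obj ⟨k, k + 1, Nat.le_succ k, le_trans h₂ p.hn⟩),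
        F.map (homOfLE ⟨h₁, h₂⟩) x = y) :=
  stmt3_general n F hspec p y
end

section
/- Let G be a connected directed graph with loose ends such that both in(G) ≠ ∅ and out(G) ≠ ∅. Then G admits at most one level graph structure; in particular the height of G, if it admits a level structure, is uniquely determined. -/
/-!
STATEMENT 6: Let `G` be a connected directed graph with loose ends such that both
`in(G) ≠ ∅` and `out(G) ≠ ∅`.  Then `G` admits at most one level graph structure; in
particular the height of `G`, if it admits a level structure, is uniquely determined.

A directed graph with loose ends is encoded by types `E` (edges) and `V` (vertices),
with `src tgt : E → Option V`: `src e` is the unique vertex having `e` as an output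
(`none` meaning `e ∈ in(G)`), `tgt e` is the unique vertex having `e` as an input
(`none` meaning `e ∈ out(G)`).
-/

/-- A level graph structure of height `n` on the graph `(E, V, src, tgt)`. -/
def IsLevelStructure {E V : Type} (src tgt : E → Option V) (n : ℕ)
    (hE : E → ℕ) (hV : V → ℕ) : Prop :=
  (∀ v, 1 ≤ hV v ∧ hV v ≤ n) ∧ (∀ e, hE e ≤ n) ∧
  (∀ e, src e = none → hE e = 0) ∧ (∀ e, tgt e = none → hE e = n) ∧
  (∀ e v, tgt e = some v → hE e = hV v - 1) ∧ (∀ e v, src e = some v → hE e = hV v)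

/-- Connectedness of the underlying undirected graph: any two edges/vertices are joined
by a zig-zag of incidences. -/
def GraphConnected {E V : Type} (src tgt : E → Option V) : Prop :=
  ∀ x y : E ⊕ V, Relation.ReflTransGen
    (fun a b =>
      match a, b with
      | Sum.inl e, Sum.inr v => src e = some v ∨ tgt e = some v
      | Sum.inr v, Sum.inl e => src e = some v ∨ tgt e = some v
      | _, _ => False) x y

theorem stmt6 (E V : Type) [Finite E] [Finite V] (src tgt : E → Option V)
    (hconn : GraphConnected src tgt)
    (h_in_nonempty : ∃ e, src e = none) (h_out_nonempty : ∃ e, tgt e = none)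
    (n₁ n₂ : ℕ) (hE₁ hE₂ : E → ℕ) (hV₁ hV₂ : V → ℕ)
    (h₁ : IsLevelStructure src tgt n₁ hE₁ hV₁)
    (h₂ : IsLevelStructure src tgt n₂ hE₂ hV₂) :
    n₁ = n₂ ∧ hE₁ = hE₂ ∧ hV₁ = hV₂ := by
  obtain ⟨hv1, he1n, hin1, hout1, htgt1, hsrc1⟩ := h₁
  obtain ⟨hv2, he2n, hin2, hout2, htgt2, hsrc2⟩ := h₂
  obtain ⟨e0, he0⟩ := h_in_nonempty
  obtain ⟨e1, he1⟩ := h_out_nonempty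
  set R : E ⊕ V → E ⊕ V → Prop := fun a b =>
      match a, b with
      | Sum.inl e, Sum.inr v => src e = some v ∨ tgt e = some v
      | Sum.inr v, Sum.inl e => src e = some v ∨ tgt e = some v
      | _, _ => False with hR
  set d : E ⊕ V → ℤ := fun x => match x with
    | Sum.inl e => (hE₁ e : ℤ) - hE₂ e
    | Sum.inr v => (hV₁ v : ℤ) - hV₂ v with hd
  have step : ∀ a b, R a b → d a = d b := by
    rintro (e | v) (e' | v') h <;> simp only [hR] at h <;> try exact h.elim
    · rcases h with h | h
      · simp only [hd, hsrc1 e v' h, hsrc2 e v' h]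
      · have h1 := htgt1 e v' h
        have h2 := htgt2 e v' h
        have g1 := (hv1 v').1
        have g2 := (hv2 v').1
        simp only [hd]
        omega
    · rcases h with h | h
      · simp only [hd, hsrc1 e' v h, hsrc2 e' v h]
      · have h1 := htgt1 e' v h
        have h2 := htgt2 e' v h
        have g1 := (hv1 v).1
        have g2 := (hv2 v).1
        simp only [hd]
        omega
  have key : ∀ x, d x = 0 := by
    intro x
    have h := hconn (Sum.inl e0) x
    have : d (Sum.inl e0) = d x := by
      induction h with
      | refl => rfl
      | tail _ hbc ih => exact ih.trans (step _ _ hbc)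
    rw [← this]
    simp only [hd, hin1 e0 he0, hin2 e0 he0]
    simp
  have hEeq : hE₁ = hE₂ := by
    funext e
    have := key (Sum.inl e)
    simp only [hd] at this
    omega
  have hVeq : hV₁ = hV₂ := by
    funext v
    have := key (Sum.inr v)
    simp only [hd] at this
    omega
  refine ⟨?_, hEeq, hVeq⟩
  have h3 := hout1 e1 he1
  have h4 := hout2 e1 he1
  have h5 : hE₁ e1 = hE₂ e1 := congrFun hEeq e1
  omega
end

section
/- Let (α, η) : G → H be a morphism of level graphs (where α : [m] → [n] in Δ and η is a natural transformation G ⇒ H ∘ ℒ^α such that each η_{i,j} : G_{i,j} → H_{α(i),α(j)} is injective and all naturality squares are pullbacks). If α is active (boundary-preserving) and η_{0,m} : G_{0,m} → H_{0,n} is a bijection, then every η_{i,j} is a bijection. -/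
/-!
STATEMENT 9: Let `(α, η) : G → H` be a morphism of level graphs (α : [m] → [n] in Δ, and
η a natural transformation `G ⇒ H ∘ ℒ^α` with injective components and cartesian
naturality squares).  If `α` is active (boundary-preserving) and
`η_{0,m} : G_{0,m} → H_{0,n}` is a bijection, then every `η_{i,j}` is a bijection.
-/

open CategoryTheory

/-- The poset ℒⁿ: pairs `(i,j)` with `0 ≤ i ≤ j ≤ n`; a (unique) morphism
`(i,j) → (i',j')` exactly when `i' ≤ i` and `j ≤ j'`. -/
@[ext]
structure LObj (n : ℕ) where
  i : Fin (n + 1)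
  j : Fin (n + 1)
  hij : i ≤ j

instance (n : ℕ) : PartialOrder (LObj n) where
  le a b := b.i ≤ a.i ∧ a.j ≤ b.j
  le_refl a := ⟨le_refl _, le_refl _⟩
  le_trans a b c h₁ h₂ := ⟨le_trans h₂.1 h₁.1, le_trans h₁.2 h₂.2⟩
  le_antisymm a b h₁ h₂ := by
    ext
    · exact congrArg Fin.val (le_antisymm h₂.1 h₁.1)
    · exact congrArg Fin.val (le_antisymm h₁.2 h₂.2)

/-- The functor `ℒ^α : ℒᵐ → ℒⁿ` induced by an order-preserving `α : [m] → [n]`. -/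
def mapL {m n : ℕ} (α : Fin (m + 1) →o Fin (n + 1)) : LObj m ⥤ LObj n :=
  Monotone.functor (f := fun p : LObj m => (⟨α p.i, α p.j, α.monotone p.hij⟩ : LObj n))
    (fun _ _ h => ⟨α.monotone h.1, α.monotone h.2⟩)

theorem stmt9 (m n : ℕ) (α : Fin (m + 1) →o Fin (n + 1))
    (G : LObj m ⥤ Type) (H : LObj n ⥤ Type)
    (hGfin : ∀ a, Finite (G.obj a)) (hHfin : ∀ a, Finite (H.obj a))
    (η : G ⟶ mapL α ⋙ H)
    -- each component is a monomorphism
    (hinj : ∀ a, Function.Injective (η.app a))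
    -- all naturality squares are cartesian (pullbacks of finite sets)
    (hcart : ∀ ⦃a b : LObj m⦄ (h : a ≤ b) (x : G.obj b) (y : H.obj ((mapL α).obj a)),
      H.map ((mapL α).map (homOfLE h)) y = η.app b x →
      ∃! z : G.obj a, η.app a z = y ∧ G.map (homOfLE h) z = x)
    -- α is active
    (hact : α 0 = 0 ∧ α (Fin.last m) = Fin.last n)
    -- η_{0,m} is a bijection
    (hbij : Function.Bijective (η.app ⟨0, Fin.last m, Fin.zero_le _⟩)) :
    ∀ a : LObj m, Function.Bijective (η.app a) := by
  intro a
  refine ⟨hinj a, fun y => ?_⟩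
  have ht : a ≤ ⟨0, Fin.last m, Fin.zero_le _⟩ := ⟨Fin.zero_le _, Fin.le_last _⟩
  obtain ⟨x, hx⟩ := hbij.2 (H.map ((mapL α).map (homOfLE ht)) y)
  obtain ⟨z, ⟨hz, _⟩, _⟩ := hcart ht x y hx.symm
  exact ⟨z, hz⟩
end
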